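/- Let μ be a Radon measure on ℝⁿ with μ(B_R(x)) ≤ D ω_{n−1} R^{n−1} for all x ∈ ℝⁿ, R > 0. Then for all r, R > 0 and x ∈ ℝⁿ, the tail bound ∫_{ℝⁿ ∖ B_R(x)} ρ_x^r dμ ≤ 2^{n−1} exp(−3R²/(8r²)) D holds, where ρ_x^r(y) = (√(2π) r)^{−(n−1)} exp(−|y−x|²/(2r²)). -/

import Mathlib

/-!
Outside `B_R(x)` we have `|y - x|² / (2r²) ≥ 3R² / (8r²) + |y - x|² / (8r²)`, so there
`ρ_x^r ≤ 2^(n-1) exp(-3R² / (8r²)) ρ_x^(2r)`, and it suffices to bound the total mass of `ρ_x^s`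
by `D`. By the layer-cake formula that mass is `∫_0^c μ {ρ_x^s > t} dt`, where `c` is the peak
value of `ρ_x^s`; each superlevel set lies in the ball of radius `√(2 s² log (c / t))`, and the
substitution `t = c e^(-u)` turns (with `m = n - 1`) `D ω_m ∫_0^c (2 s² log (c / t))^(m/2) dt` into
`D ω_m Γ(m/2 + 1) / π^(m/2) = D`.
-/

open MeasureTheory Set Real Metric
open scoped ENNReal

noncomputable def unitBallVolume (m : ℕ) : ℝ :=
  (volume (ball (0 : EuclideanSpace ℝ (Fin m)) 1)).toReal

theorem unitBallVolume_mul_Gamma (m : ℕ) :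
    unitBallVolume m * Gamma (m / 2 + 1) = √π ^ m := by
  rcases m.eq_zero_or_pos with rfl | hm
  · have hball : ball (0 : EuclideanSpace ℝ (Fin 0)) 1 = univ :=
      eq_univ_of_forall fun y => by simp [Subsingleton.elim y 0]
    have hvol := (PiLp.volume_preserving_toLp (Fin 0)).measure_preimage (s := univ) (by simp)
    rw [unitBallVolume, hball, ← hvol, preimage_univ, volume_pi, Measure.pi_univ]
    simp
  · have : Nonempty (Fin m) := ⟨⟨0, hm⟩⟩
    rw [unitBallVolume, EuclideanSpace.volume_ball, Fintype.card_fin, ENNReal.ofReal_one, one_pow,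
      one_mul, ENNReal.toReal_ofReal (by positivity),
      div_mul_cancel₀ _ (Gamma_pos_of_pos (by positivity)).ne']

noncomputable def gaussianKernel {E : Type*} [SeminormedAddCommGroup E] (m : ℕ) (r : ℝ)
    (x y : E) : ℝ :=
  ((√(2 * π) * r) ^ m)⁻¹ * exp (-‖y - x‖ ^ 2 / (2 * r ^ 2))

section gaussianKernel

variable {E : Type*} [SeminormedAddCommGroup E]

theorem gaussianKernel_le_of_le_norm (m : ℕ) {r R : ℝ} (hr : 0 ≤ r) (hR : 0 ≤ R) {x y : E}
    (hy : R ≤ ‖y - x‖) :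
    gaussianKernel m r x y ≤
      2 ^ m * exp (-3 * R ^ 2 / (8 * r ^ 2)) * gaussianKernel m (2 * r) x y := by
  have hexp : -‖y - x‖ ^ 2 / (2 * r ^ 2) ≤
      -3 * R ^ 2 / (8 * r ^ 2) + -‖y - x‖ ^ 2 / (2 * (2 * r) ^ 2) := by
    have hk : 0 ≤ (8 * r ^ 2)⁻¹ := by positivity
    have hsq : R ^ 2 ≤ ‖y - x‖ ^ 2 := by gcongr
    simp only [div_eq_mul_inv, show (2 * r ^ 2)⁻¹ = 4 * (8 * r ^ 2)⁻¹ by ring,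
      show (2 * (2 * r) ^ 2)⁻¹ = (8 * r ^ 2)⁻¹ by ring]
    nlinarith
  have hscale : ((√(2 * π) * (2 * r)) ^ m)⁻¹ = (2 ^ m)⁻¹ * ((√(2 * π) * r) ^ m)⁻¹ := by
    rw [mul_left_comm, mul_pow, mul_inv]
  calc gaussianKernel m r x y
      ≤ ((√(2 * π) * r) ^ m)⁻¹ *
          (exp (-3 * R ^ 2 / (8 * r ^ 2)) * exp (-‖y - x‖ ^ 2 / (2 * (2 * r) ^ 2))) := by
        rw [gaussianKernel, ← exp_add]
        gcongr
    _ = 2 ^ m * exp (-3 * R ^ 2 / (8 * r ^ 2)) * gaussianKernel m (2 * r) x y := by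
        rw [gaussianKernel, hscale]
        field_simp

theorem gaussianKernel_le (m : ℕ) {r : ℝ} (hr : 0 ≤ r) (x y : E) :
    gaussianKernel m r x y ≤ ((√(2 * π) * r) ^ m)⁻¹ := by
  refine mul_le_of_le_one_right (by positivity) (exp_le_one_iff.2 ?_)
  exact div_nonpos_of_nonpos_of_nonneg (by simp) (by positivity)

theorem setOf_lt_gaussianKernel_subset_ball (m : ℕ) {r t : ℝ} (hr : 0 < r) (ht : 0 < t)
    (x : E) :
    {y | t < gaussianKernel m r x y} ⊆
      ball x √(2 * r ^ 2 * log (((√(2 * π) * r) ^ m)⁻¹ / t)) := by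
  set c := ((√(2 * π) * r) ^ m)⁻¹
  have hc : 0 < c := by positivity
  intro y (hy : t < c * exp (-‖y - x‖ ^ 2 / (2 * r ^ 2)))
  have hlog := log_lt_log ht hy
  rw [log_mul hc.ne' (exp_pos _).ne', log_exp, neg_div, ← sub_eq_add_neg, lt_sub_comm,
    div_lt_iff₀ (by positivity), ← log_div hc.ne' ht.ne'] at hlog
  rw [mem_ball_iff_norm, lt_sqrt (norm_nonneg _)]
  linarith

end gaussianKernel

theorem image_mul_exp_neg_Ioi {c : ℝ} (hc : 0 < c) :
    (fun u => c * exp (-u)) '' Ioi 0 = Ioo 0 c := by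
  ext t
  constructor
  · rintro ⟨u, hu, rfl⟩
    exact ⟨by positivity, mul_lt_of_lt_one_right hc (exp_lt_one_iff.2 (neg_lt_zero.2 hu))⟩
  · rintro ⟨ht, htc⟩
    refine ⟨log (c / t), log_pos ((one_lt_div ht).2 htc), ?_⟩
    simp only [exp_neg, exp_log (div_pos hc ht)]
    field_simp

theorem lintegral_Ioo_comp_log_div {c : ℝ} (hc : 0 < c) (g : ℝ → ℝ≥0∞) :
    ∫⁻ t in Ioo 0 c, g (log (c / t)) = ∫⁻ u in Ioi 0, ENNReal.ofReal (c * exp (-u)) * g u := by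
  have hderiv (u : ℝ) : HasDerivAt (fun u => c * exp (-u)) (-(c * exp (-u))) u := by
    simpa using (hasDerivAt_neg u).exp.const_mul c
  have hinj : InjOn (fun u => c * exp (-u)) (Ioi 0) := fun u _ v _ h => by
    simpa [hc.ne'] using h
  rw [← image_mul_exp_neg_Ioi hc, lintegral_image_eq_lintegral_abs_deriv_mul measurableSet_Ioi
    (fun u _ => (hderiv u).hasDerivWithinAt) hinj]
  refine setLIntegral_congr_fun measurableSet_Ioi fun u _ => ?_
  rw [abs_neg, abs_of_pos (by positivity), div_mul_cancel_left₀ hc.ne', ← exp_neg, neg_neg,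
    log_exp]

theorem lintegral_exp_neg_mul_rpow_eq_Gamma {s : ℝ} (hs : 0 < s) :
    ∫⁻ u in Ioi 0, ENNReal.ofReal (exp (-u) * u ^ (s - 1)) = ENNReal.ofReal (Gamma s) := by
  rw [Gamma_eq_integral hs, ofReal_integral_eq_lintegral_ofReal (GammaIntegral_convergent hs)]
  exact ae_restrict_of_forall_mem measurableSet_Ioi fun u (hu : 0 < u) => by positivity

theorem lintegral_Ioo_sqrt_log_div_pow (m : ℕ) {r c : ℝ} (hr : 0 ≤ r) (hc : 0 < c) :
    ∫⁻ t in Ioo 0 c, ENNReal.ofReal (√(2 * r ^ 2 * log (c / t)) ^ m) =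
      ENNReal.ofReal ((√2 * r) ^ m * c * Gamma (m / 2 + 1)) := by
  have hsubst (u : ℝ) (hu : 0 < u) :
      ENNReal.ofReal (c * exp (-u)) * ENNReal.ofReal (√(2 * r ^ 2 * u) ^ m) =
        ENNReal.ofReal ((√2 * r) ^ m * c) *
          ENNReal.ofReal (exp (-u) * u ^ ((m / 2 + 1 : ℝ) - 1)) := by
    rw [← ENNReal.ofReal_mul (by positivity), ← ENNReal.ofReal_mul (by positivity),
      add_sub_cancel_right, sqrt_mul' _ hu.le, sqrt_mul (by positivity), sqrt_sq hr, mul_pow,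
      rpow_div_two_eq_sqrt _ hu.le, rpow_natCast]
    ring_nf
  rw [lintegral_Ioo_comp_log_div hc fun u => ENNReal.ofReal (√(2 * r ^ 2 * u) ^ m),
    setLIntegral_congr_fun measurableSet_Ioi hsubst, lintegral_const_mul' _ _ ENNReal.ofReal_ne_top,
    lintegral_exp_neg_mul_rpow_eq_Gamma (by positivity), ← ENNReal.ofReal_mul (by positivity)]

theorem lintegral_gaussianKernel_le {X : Type*} [SeminormedAddCommGroup X] [MeasurableSpace X]
    [OpensMeasurableSpace X] (μ : Measure X) (m : ℕ) (D : ℝ) {r : ℝ} (hr : 0 < r) (x : X)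
    (hμ : ∀ s, 0 < s → μ (ball x s) ≤ ENNReal.ofReal (D * unitBallVolume m * s ^ m)) :
    ∫⁻ y, ENNReal.ofReal (gaussianKernel m r x y) ∂μ ≤ ENNReal.ofReal D := by
  set c := ((√(2 * π) * r) ^ m)⁻¹
  set ω := unitBallVolume m
  have hω : 0 ≤ ω := ENNReal.toReal_nonneg
  have hlevel (t : ℝ) (ht : t ∈ Ioi 0) : μ {y | t < gaussianKernel m r x y} ≤ (Ioo 0 c).indicator
      (fun t => ENNReal.ofReal D * ENNReal.ofReal (ω * √(2 * r ^ 2 * log (c / t)) ^ m)) t := by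
    by_cases htc : t < c
    · have hradius : 0 < √(2 * r ^ 2 * log (c / t)) :=
        sqrt_pos.2 (mul_pos (by positivity) (log_pos ((one_lt_div ht).2 htc)))
      have hmem : t ∈ Ioo 0 c := ⟨ht, htc⟩
      rw [indicator_of_mem hmem, ← ENNReal.ofReal_mul' (by positivity), ← mul_assoc]
      exact (measure_mono (setOf_lt_gaussianKernel_subset_ball m hr ht x)).trans (hμ _ hradius)
    · have hempty : {y | t < gaussianKernel m r x y} = ∅ := eq_empty_of_forall_notMem fun y hy =>
        htc (hy.trans_le (gaussianKernel_le m hr.le x y))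
      simp [hempty]
  have hnorm : ω * ((√2 * r) ^ m * c * Gamma (m / 2 + 1)) = 1 := by
    rw [show ω * ((√2 * r) ^ m * c * Gamma (m / 2 + 1)) =
      ω * Gamma (m / 2 + 1) * ((√2 * r) ^ m * c) by ring, unitBallVolume_mul_Gamma]
    simp only [c, sqrt_mul zero_le_two π]
    field_simp
    ring
  calc ∫⁻ y, ENNReal.ofReal (gaussianKernel m r x y) ∂μ
      = ∫⁻ t in Ioi 0, μ {y | t < gaussianKernel m r x y} :=
        lintegral_eq_lintegral_meas_lt μ (ae_of_all _ fun y => by unfold gaussianKernel; positivity)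
          (by unfold gaussianKernel; fun_prop : Continuous _).measurable.aemeasurable
    _ ≤ ∫⁻ t in Ioi 0, (Ioo 0 c).indicator
          (fun t => ENNReal.ofReal D * ENNReal.ofReal (ω * √(2 * r ^ 2 * log (c / t)) ^ m)) t :=
        setLIntegral_mono' measurableSet_Ioi hlevel
    _ ≤ ENNReal.ofReal D *
          ∫⁻ t in Ioo 0 c, ENNReal.ofReal (ω * √(2 * r ^ 2 * log (c / t)) ^ m) := by
        rw [← lintegral_const_mul' _ _ ENNReal.ofReal_ne_top,
          ← lintegral_indicator measurableSet_Ioo]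
        exact setLIntegral_le_lintegral _ _
    _ = ENNReal.ofReal D := by
        simp_rw [ENNReal.ofReal_mul hω]
        rw [lintegral_const_mul' _ _ ENNReal.ofReal_ne_top,
          lintegral_Ioo_sqrt_log_div_pow m hr.le (by positivity), ← ENNReal.ofReal_mul hω, hnorm,
          ENNReal.ofReal_one, mul_one]

theorem gaussian_kernel_tail_bound_general
    (n : ℕ) (μ : Measure (EuclideanSpace ℝ (Fin n)))
    (D : ℝ)
    (hμ : ∀ (x : EuclideanSpace ℝ (Fin n)) (R : ℝ), 0 < R →
      μ (Metric.ball x R) ≤ ENNReal.ofReal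
        (D * (volume (Metric.ball (0 : EuclideanSpace ℝ (Fin (n - 1))) 1)).toReal *
          R ^ (n - 1)))
    (x : EuclideanSpace ℝ (Fin n)) (r R : ℝ) (hr : 0 < r) (hR : 0 < R) :
    ∫⁻ y in (Metric.ball x R)ᶜ, ENNReal.ofReal
        (((Real.sqrt (2 * Real.pi) * r) ^ (n - 1))⁻¹ *
          Real.exp (-‖y - x‖ ^ 2 / (2 * r ^ 2))) ∂μ ≤
      ENNReal.ofReal (2 ^ (n - 1) * Real.exp (-3 * R ^ 2 / (8 * r ^ 2)) * D) := by
  set K := 2 ^ (n - 1) * exp (-3 * R ^ 2 / (8 * r ^ 2))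
  calc ∫⁻ y in (ball x R)ᶜ, ENNReal.ofReal (gaussianKernel (n - 1) r x y) ∂μ
      ≤ ∫⁻ y in (ball x R)ᶜ, ENNReal.ofReal K *
          ENNReal.ofReal (gaussianKernel (n - 1) (2 * r) x y) ∂μ := by
        refine setLIntegral_mono' measurableSet_ball.compl fun y hy => ?_
        have hRy : R ≤ ‖y - x‖ := by simpa [dist_eq_norm] using hy
        rw [← ENNReal.ofReal_mul (by positivity)]
        exact ENNReal.ofReal_le_ofReal (gaussianKernel_le_of_le_norm _ hr.le hR.le hRy)
    _ ≤ ENNReal.ofReal K * ∫⁻ y, ENNReal.ofReal (gaussianKernel (n - 1) (2 * r) x y) ∂μ := by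
        rw [lintegral_const_mul' _ _ ENNReal.ofReal_ne_top]
        gcongr
        exact Measure.restrict_le_self
    _ ≤ ENNReal.ofReal K * ENNReal.ofReal D := by
        gcongr
        exact lintegral_gaussianKernel_le μ (n - 1) D (by positivity) x (hμ x)
    _ = ENNReal.ofReal (K * D) := (ENNReal.ofReal_mul (by positivity)).symm

theorem gaussian_kernel_tail_bound
    (n : ℕ) (hn : 2 ≤ n) (μ : Measure (EuclideanSpace ℝ (Fin n)))
    [IsLocallyFiniteMeasure μ] (D : ℝ) (hD : 0 < D)
    (hμ : ∀ (x : EuclideanSpace ℝ (Fin n)) (R : ℝ), 0 < R →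
      μ (Metric.ball x R) ≤ ENNReal.ofReal
        (D * (volume (Metric.ball (0 : EuclideanSpace ℝ (Fin (n - 1))) 1)).toReal *
          R ^ (n - 1)))
    (x : EuclideanSpace ℝ (Fin n)) (r R : ℝ) (hr : 0 < r) (hR : 0 < R) :
    ∫⁻ y in (Metric.ball x R)ᶜ, ENNReal.ofReal
        (((Real.sqrt (2 * Real.pi) * r) ^ (n - 1))⁻¹ *
          Real.exp (-‖y - x‖ ^ 2 / (2 * r ^ 2))) ∂μ ≤
      ENNReal.ofReal (2 ^ (n - 1) * Real.exp (-3 * R ^ 2 / (8 * r ^ 2)) * D) :=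
  gaussian_kernel_tail_bound_general n μ D hμ x r R hr hR
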